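/- Let R be a commutative unital ring, I an ideal of R, and M an R-module that is both flat and I-coreduced. Then F_I(M) := lim_k (I^k ⊗_R M) (the inverse limit over k ≥ 1 along the maps induced by the inclusions I^{k+1} ⊆ I^k) is isomorphic to I ⊗_R M; equivalently, F_I(M) ≅ IM. -/
import Mathlib


/-!
STATEMENT 3: Let `R` be a commutative unital ring, `I` an ideal of `R`, and `M` an `R`-module
that is both flat and `I`-coreduced. Then `F_I(M) := lim_k (I^k ⊗_R M)` (inverse limit over
`k ≥ 1` along the maps induced by the inclusions `I^{k+1} ⊆ I^k`) is isomorphic to `I ⊗_R M`.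

The inverse limit over `k ≥ 1` is indexed by `k : ℕ`, with the `k`-th term `I^(k+1) ⊗_R M`,
and is realized as the submodule of the product `Π k, I^(k+1) ⊗_R M` consisting of the
families compatible with the transition maps.
-/

universe u

open TensorProduct

/-- The inverse limit of an inverse system of `R`-modules indexed by `ℕ`
(with transition maps `f k l h : G l →ₗ[R] G k` for `h : k ≤ l`), realized as the submodule
of compatible families in the product. -/
def invLimit (R : Type u) [CommRing R] (G : ℕ → Type u) [∀ k, AddCommGroup (G k)]
    [∀ k, Module R (G k)] (f : ∀ k l : ℕ, k ≤ l → G l →ₗ[R] G k) :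
    Submodule R (∀ k, G k) where
  carrier := { x | ∀ (k l : ℕ) (h : k ≤ l), f k l h (x l) = x k }
  add_mem' := by
    intro a b ha hb k l h
    simp [ha k l h, hb k l h]
  zero_mem' := by
    intro k l h
    simp
  smul_mem' := by
    intro c a ha k l h
    simp [ha k l h]

/-- The inverse system `k ↦ I^(k+1) ⊗_R M` with transition maps induced by the inclusions
`I^(l+1) ⊆ I^(k+1)` for `k ≤ l`. -/
noncomputable def tensorPowDiagram (R : Type u) [CommRing R] (I : Ideal R) (M : Type u)
    [AddCommGroup M] [Module R M] :
    ∀ k l : ℕ, k ≤ l → (↥(I ^ (l + 1)) ⊗[R] M) →ₗ[R] (↥(I ^ (k + 1)) ⊗[R] M) :=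
  fun _ _ h =>
    LinearMap.rTensor M (Submodule.inclusion (Ideal.pow_le_pow_right (by omega)))

/-- `F_I(M) = lim_{k ≥ 1} (I^k ⊗_R M)`, the dual of the ideal transform. -/
noncomputable abbrev dualTransform (R : Type u) [CommRing R] (I : Ideal R) (M : Type u)
    [AddCommGroup M] [Module R M] : Submodule R (∀ k : ℕ, ↥(I ^ (k + 1)) ⊗[R] M) :=
  invLimit R (fun k : ℕ => ↥(I ^ (k + 1)) ⊗[R] M) (tensorPowDiagram R I M)


section Aux

variable (R : Type u) [CommRing R] (I : Ideal R) (M : Type u) [AddCommGroup M] [Module R M]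

/-- The canonical map `I^(k+1) ⊗ M → M`. -/
noncomputable def iotaMap (k : ℕ) : (↥(I ^ (k + 1)) ⊗[R] M) →ₗ[R] M :=
  (TensorProduct.lid R M).toLinearMap ∘ₗ LinearMap.rTensor M (Submodule.subtype (I ^ (k + 1)))

lemma iotaMap_tmul (k : ℕ) (i : ↥(I ^ (k + 1))) (m : M) :
    iotaMap R I M k (i ⊗ₜ m) = (i : R) • m := by
  simp [iotaMap]

lemma iotaMap_comp (k l : ℕ) (h : k ≤ l) :
    iotaMap R I M k ∘ₗ tensorPowDiagram R I M k l h = iotaMap R I M l := by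
  apply TensorProduct.ext'
  intro i m
  simp [iotaMap, tensorPowDiagram, Submodule.inclusion]

lemma iotaMap_inj (hflat : Module.Flat R M) (k : ℕ) :
    Function.Injective (iotaMap R I M k) :=
  (TensorProduct.lid R M).injective.comp
    (Module.Flat.rTensor_preserves_injective_linearMap _ (Submodule.injective_subtype _))

lemma iotaMap_mem (k : ℕ) (x : ↥(I ^ (k + 1)) ⊗[R] M) :
    iotaMap R I M k x ∈ I ^ (k + 1) • (⊤ : Submodule R M) := by
  induction x using TensorProduct.induction_on with
  | zero => simp
  | tmul i m =>
      rw [iotaMap_tmul]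
      exact Submodule.smul_mem_smul i.2 trivial
  | add x y hx hy => rw [map_add]; exact Submodule.add_mem _ hx hy

lemma iotaMap_surj (k : ℕ) (m : M) (hm : m ∈ I ^ (k + 1) • (⊤ : Submodule R M)) :
    ∃ x, iotaMap R I M k x = m := by
  refine Submodule.smul_induction_on hm ?_ ?_
  · intro i hi n _
    exact ⟨⟨i, hi⟩ ⊗ₜ n, by simp [iotaMap_tmul]⟩
  · rintro a b ⟨x, hx⟩ ⟨y, hy⟩
    exact ⟨x + y, by simp [hx, hy]⟩

lemma pow_smul_eq (hcor : I ^ 2 • (⊤ : Submodule R M) = I • (⊤ : Submodule R M)) (k : ℕ) :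
    I ^ (k + 1) • (⊤ : Submodule R M) = I • (⊤ : Submodule R M) := by
  induction k with
  | zero => rw [pow_one]
  | succ n ih =>
      have : I ^ (n + 1 + 1) = I * I ^ (n + 1) := by ring
      rw [this, mul_smul, ih, ← mul_smul, ← pow_two, hcor]

end Aux

theorem stmt3 (R : Type u) [CommRing R] (I : Ideal R) (M : Type u) [AddCommGroup M]
    [Module R M] (hflat : Module.Flat R M)
    (hcor : I ^ 2 • (⊤ : Submodule R M) = I • (⊤ : Submodule R M)) :
    Nonempty (↥(dualTransform R I M) ≃ₗ[R] (↥I ⊗[R] M)) := by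
  classical
  set f := tensorPowDiagram R I M with hf
  -- the equivalence at index 0
  let e01 : (↥(I ^ (0 + 1)) ⊗[R] M) ≃ₗ[R] (↥I ⊗[R] M) :=
    TensorProduct.congr (LinearEquiv.ofEq _ _ (by rw [zero_add, pow_one]))
      (LinearEquiv.refl R M)
  let φ : ↥(dualTransform R I M) →ₗ[R] (↥I ⊗[R] M) :=
    e01.toLinearMap ∘ₗ (LinearMap.proj 0) ∘ₗ (dualTransform R I M).subtype
  have hconst : ∀ (x : ↥(dualTransform R I M)) (k : ℕ),
      iotaMap R I M k (x.1 k) = iotaMap R I M 0 (x.1 0) := by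
    intro x k
    have hx := x.2 0 k (Nat.zero_le k)
    calc iotaMap R I M k (x.1 k) = iotaMap R I M 0 (f 0 k (Nat.zero_le k) (x.1 k)) := by
          rw [← LinearMap.comp_apply, iotaMap_comp]
      _ = iotaMap R I M 0 (x.1 0) := by rw [hx]
  have hinj : Function.Injective φ := by
    intro x y hxy
    have h0 : x.1 0 = y.1 0 := e01.injective (by simpa [φ] using hxy)
    ext k
    refine iotaMap_inj R I M hflat k ?_
    rw [hconst x k, hconst y k, h0]
  have hsurj : Function.Surjective φ := by
    intro y
    set y0 : ↥(I ^ (0 + 1)) ⊗[R] M := e01.symm y with hy0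
    set m : M := iotaMap R I M 0 y0 with hm
    have hmI : ∀ k, m ∈ I ^ (k + 1) • (⊤ : Submodule R M) := by
      intro k
      rw [pow_smul_eq R I M hcor k, ← pow_smul_eq R I M hcor 0]
      exact iotaMap_mem R I M 0 y0
    choose x hx using fun k => iotaMap_surj R I M k m (hmI k)
    have hxmem : x ∈ dualTransform R I M := by
      intro k l h
      refine iotaMap_inj R I M hflat k ?_
      rw [← LinearMap.comp_apply, iotaMap_comp, hx l, hx k]
    refine ⟨⟨x, hxmem⟩, ?_⟩
    have hx0 : x 0 = y0 := iotaMap_inj R I M hflat 0 (by rw [hx 0, hm])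
    simp [φ, hx0, hy0]
  exact ⟨LinearEquiv.ofBijective φ ⟨hinj, hsurj⟩⟩
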